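/- Let P = {x ∈ ℝ^n : ⟨x, u_i⟩ ≥ −a_i for i = 1, …, r} be a nonempty polyhedron, where u_1, …, u_r ∈ ℝ^n and a_1, …, a_r ∈ ℝ, and let U ⊆ ℝ^n be a linear subspace with P ∩ U ≠ ∅. Then every face of the convex set P ∩ U is of the form Q ∩ U for some face Q of P. -/

import Mathlib

open scoped RealInnerProductSpace

/-- A (nonempty, exposed) face of a convex set `C ⊆ ℝ^n`: a nonempty set of the
form `{x ∈ C | ⟨x, φ⟩ = sup_{y ∈ C} ⟨y, φ⟩}` for some `φ ∈ ℝ^n`.  Taking `φ = 0`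
shows that `C` itself is a face. -/
def IsFaceOf {n : ℕ} (C F : Set (EuclideanSpace ℝ (Fin n))) : Prop :=
  F.Nonempty ∧ ∃ φ : EuclideanSpace ℝ (Fin n),
    F = {x ∈ C | ⟪x, φ⟫ = sSup ((fun y => ⟪y, φ⟫) '' C)}

private lemma exists_pos_t {ι : Type*} (J : Finset ι) (b c : ι → ℝ)
    (hb : ∀ i ∈ J, 0 < b i) : ∃ t : ℝ, 0 < t ∧ ∀ i ∈ J, 0 ≤ b i + t * c i := by
  classical
  induction J using Finset.induction_on with
  | empty => exact ⟨1, one_pos, by simp⟩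
  | @insert k J' hk ih =>
    obtain ⟨t, ht, hJ⟩ := ih (fun j hj => hb j (Finset.mem_insert_of_mem hj))
    have hbk := hb k (Finset.mem_insert_self _ _)
    by_cases hc : 0 ≤ c k
    · refine ⟨t, ht, fun j hj => ?_⟩
      rcases Finset.mem_insert.1 hj with rfl | hj
      · nlinarith
      · exact hJ j hj
    · push_neg at hc
      have hck : 0 < -(c k) := by linarith
      refine ⟨min t (b k / (-(c k))), lt_min ht (div_pos hbk hck), fun j hj => ?_⟩
      rcases Finset.mem_insert.1 hj with rfl | hj
      · have h1 : min t (b j / (-(c j))) ≤ b j / (-(c j)) := min_le_right _ _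
        have h2 : min t (b j / (-(c j))) * (-(c j)) ≤ b j := by
          rw [← le_div_iff₀ (by linarith)]; exact h1
        nlinarith
      · have h2 : min t (b k / (-(c k))) ≤ t := min_le_left _ _
        have h3 := hJ j hj
        have hbj := hb j (Finset.mem_insert_of_mem hj)
        have hmin : 0 < min t (b k / (-(c k))) := lt_min ht (div_pos hbk hck)
        rcases le_or_gt 0 (c j) with h | h
        · nlinarith
        · nlinarith

set_option maxHeartbeats 1000000 in
/-- Intermediate claim in the proof of Lemma 3.2: every face of the slice `P ∩ U`
of a polyhedron `P` by a linear subspace `U` is of the form `Q ∩ U` for a face `Q`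
of `P`. -/
theorem stmt11 (n r : ℕ) (u : Fin r → EuclideanSpace ℝ (Fin n)) (a : Fin r → ℝ)
    (P : Set (EuclideanSpace ℝ (Fin n)))
    (hP : P = {x : EuclideanSpace ℝ (Fin n) | ∀ i, -(a i) ≤ ⟪x, u i⟫})
    (hPne : P.Nonempty)
    (U : Submodule ℝ (EuclideanSpace ℝ (Fin n)))
    (hPU : (P ∩ (U : Set (EuclideanSpace ℝ (Fin n)))).Nonempty) :
    ∀ F : Set (EuclideanSpace ℝ (Fin n)),
      IsFaceOf (P ∩ (U : Set (EuclideanSpace ℝ (Fin n)))) F →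
        ∃ Q : Set (EuclideanSpace ℝ (Fin n)), IsFaceOf P Q ∧
          F = Q ∩ (U : Set (EuclideanSpace ℝ (Fin n))) := by
  classical
  intro F hF
  obtain ⟨hFne, φ, hFdef⟩ := hF
  set C : Set (EuclideanSpace ℝ (Fin n)) := P ∩ ↑U with hC
  have hCP : C ⊆ P := Set.inter_subset_left
  have hCU : C ⊆ ↑U := Set.inter_subset_right
  have hPmem : ∀ x ∈ P, ∀ i, -(a i) ≤ ⟪x, u i⟫ := by
    intro x hx i; rw [hP] at hx; exact hx i
  obtain ⟨x₁, hx₁F⟩ := hFne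
  have hx₁ : x₁ ∈ C ∧ ⟪x₁, φ⟫ = sSup ((fun y => ⟪y, φ⟫) '' C) := by
    rw [hFdef] at hx₁F; exact hx₁F
  by_cases hbdd : BddAbove ((fun y => ⟪y, φ⟫) '' C)
  · -- bounded case
    set s := sSup ((fun y => ⟪y, φ⟫) '' C) with hs
    have hub : ∀ x ∈ C, ⟪x, φ⟫ ≤ s := fun x hx => le_csSup hbdd ⟨x, hx, rfl⟩
    have hFmem : ∀ x, x ∈ F ↔ x ∈ C ∧ ⟪x, φ⟫ = s := by
      intro x; rw [hFdef]; exact Iff.rfl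
    have hx₁F' : x₁ ∈ F := by rw [hFdef]; exact hx₁
    set I : Finset (Fin r) := Finset.univ.filter (fun i => ∀ x ∈ F, ⟪x, u i⟫ = -(a i))
      with hI
    -- convexity of P, C, F
    have hPconv : Convex ℝ P := by
      rw [hP]
      intro x hx y hy p q hp hq hpq
      intro i
      have h1 := hx i
      have h2 := hy i
      have h3 : ⟪p • x + q • y, u i⟫ = p * ⟪x, u i⟫ + q * ⟪y, u i⟫ := by
        rw [inner_add_left, real_inner_smul_left, real_inner_smul_left]
      show -(a i) ≤ ⟪p • x + q • y, u i⟫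
      rw [h3]
      have h4 : p * (-(a i)) + q * (-(a i)) = -(a i) := by rw [← add_mul, hpq, one_mul]
      have h5 := mul_le_mul_of_nonneg_left h1 hp
      have h6 := mul_le_mul_of_nonneg_left h2 hq
      linarith
    have hCconv : Convex ℝ C := hPconv.inter U.convex
    have hFconv : Convex ℝ F := by
      intro x hx y hy p q hp hq hpq
      rw [hFmem] at hx hy ⊢
      refine ⟨hCconv hx.1 hy.1 hp hq hpq, ?_⟩
      rw [inner_add_left, real_inner_smul_left, real_inner_smul_left, hx.2, hy.2,
        ← add_mul, hpq, one_mul]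
    -- a point of F with strict inequalities outside I
    have hx₀ex : ∃ x₀ ∈ F, ∀ i, i ∉ I → -(a i) < ⟪x₀, u i⟫ := by
      set J := Finset.univ.filter (fun i : Fin r => i ∉ I) with hJdef
      have hJmem : ∀ i, i ∉ I ↔ i ∈ J := by
        intro i
        rw [hJdef]
        simp only [Finset.mem_filter, Finset.mem_univ, true_and]
      rcases J.eq_empty_or_nonempty with hJe | hJne
      · exact ⟨x₁, hx₁F', fun i hi => absurd ((hJmem i).1 hi) (by simp [hJe])⟩
      · have hw : ∀ i : Fin r, ∃ x, i ∈ J → x ∈ F ∧ -(a i) < ⟪x, u i⟫ := by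
          intro i
          by_cases hi : i ∈ J
          · have hi' : ¬ ∀ x ∈ F, ⟪x, u i⟫ = -(a i) := by
              intro h
              exact ((hJmem i).2 hi) (Finset.mem_filter.2 ⟨Finset.mem_univ _, h⟩)
            push_neg at hi'
            obtain ⟨x, hxF, hne⟩ := hi'
            have hxP : x ∈ P := hCP ((hFmem x).1 hxF).1
            exact ⟨x, fun _ => ⟨hxF, lt_of_le_of_ne (hPmem x hxP i) (Ne.symm hne)⟩⟩
          · exact ⟨x₁, fun h => absurd h hi⟩
        choose w hwspec using hw
        set m : ℝ := (J.card : ℝ)⁻¹ with hm'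
        have hm : 0 < m := inv_pos.2 (by exact_mod_cast Finset.card_pos.2 hJne)
        have hcard : (J.card : ℝ) ≠ 0 := by
          exact_mod_cast (Finset.card_pos.2 hJne).ne'
        have hsum : ∑ _i ∈ J, m = 1 := by
          rw [Finset.sum_const, nsmul_eq_mul, hm', mul_inv_cancel₀ hcard]
        set x₀ := ∑ i ∈ J, m • w i with hx₀def
        have hx₀F : x₀ ∈ F :=
          hFconv.sum_mem (fun i _ => le_of_lt hm) hsum (fun i hi => (hwspec i hi).1)
        refine ⟨x₀, hx₀F, fun i hiI => ?_⟩
        have hiJ := (hJmem i).1 hiI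
        have hinner : ⟪x₀, u i⟫ = ∑ j ∈ J, m * ⟪w j, u i⟫ := by
          rw [hx₀def, sum_inner]
          exact Finset.sum_congr rfl fun j _ => real_inner_smul_left _ _ _
        have hlt : ∑ _j ∈ J, m * (-(a i)) < ∑ j ∈ J, m * ⟪w j, u i⟫ := by
          apply Finset.sum_lt_sum
          · intro j hj
            have hwP : w j ∈ P := hCP ((hFmem _).1 (hwspec j hj).1).1
            have := hPmem (w j) hwP i
            nlinarith
          · exact ⟨i, hiJ, by have := (hwspec i hiJ).2; nlinarith⟩
        have hsum2 : ∑ _j ∈ J, m * (-(a i)) = -(a i) := by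
          rw [← Finset.sum_mul, hsum, one_mul]
        rw [hinner]
        rw [hsum2] at hlt
        exact hlt
    obtain ⟨x₀, hx₀F, hx₀strict⟩ := hx₀ex
    have hx₀C : x₀ ∈ C := ((hFmem x₀).1 hx₀F).1
    have hx₀s : ⟪x₀, φ⟫ = s := ((hFmem x₀).1 hx₀F).2
    -- key claim : F is the set of points of C where all constraints in I are tight
    have key : F = {x | x ∈ C ∧ ∀ i ∈ I, ⟪x, u i⟫ = -(a i)} := by
      ext x
      simp only [Set.mem_setOf_eq]
      constructor
      · intro hxF
        exact ⟨((hFmem x).1 hxF).1, fun i hi => (Finset.mem_filter.1 hi).2 x hxF⟩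
      · rintro ⟨hxC, htight⟩
        have hb : ∀ i ∈ Finset.univ.filter (fun i : Fin r => i ∉ I),
            0 < ⟪x₀, u i⟫ + a i := by
          intro i hi
          have := hx₀strict i (Finset.mem_filter.1 hi).2
          linarith
        obtain ⟨t, ht, hty⟩ := exists_pos_t (Finset.univ.filter (fun i : Fin r => i ∉ I))
          (fun i => ⟪x₀, u i⟫ + a i) (fun i => ⟪x₀, u i⟫ - ⟪x, u i⟫) hb
        set y := x₀ + t • (x₀ - x) with hydef
        have hyval : ∀ v : EuclideanSpace ℝ (Fin n),
            ⟪y, v⟫ = ⟪x₀, v⟫ + t * (⟪x₀, v⟫ - ⟪x, v⟫) := by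
          intro v
          rw [hydef, inner_add_left, real_inner_smul_left, inner_sub_left]
        have hyP : y ∈ P := by
          rw [hP]
          intro i
          rw [hyval (u i)]
          by_cases hi : i ∈ I
          · have h1 : ⟪x₀, u i⟫ = -(a i) := (Finset.mem_filter.1 hi).2 x₀ hx₀F
            have h2 : ⟪x, u i⟫ = -(a i) := htight i hi
            rw [h1, h2]
            ring_nf
            exact le_refl _
          · have := hty i (Finset.mem_filter.2 ⟨Finset.mem_univ _, hi⟩)
            linarith
        have hyU : y ∈ (U : Set (EuclideanSpace ℝ (Fin n))) := by
          have hx₀U : x₀ ∈ U := hx₀C.2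
          have hxU : x ∈ U := hxC.2
          exact U.add_mem hx₀U (U.smul_mem t (U.sub_mem hx₀U hxU))
        have hyle := hub y ⟨hyP, hyU⟩
        rw [hyval φ, hx₀s] at hyle
        have hxle := hub x hxC
        have hps : ⟪x, φ⟫ = s := by
          by_contra hne
          have hlt : ⟪x, φ⟫ < s := lt_of_le_of_ne hxle hne
          nlinarith
        exact (hFmem x).2 ⟨hxC, hps⟩
    -- the face Q of P
    set ψ : EuclideanSpace ℝ (Fin n) := -(∑ i ∈ I, u i) with hψ
    have hval : ∀ x : EuclideanSpace ℝ (Fin n), ⟪x, ψ⟫ = ∑ i ∈ I, -⟪x, u i⟫ := by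
      intro x
      rw [hψ, inner_neg_right, inner_sum]
      rw [← Finset.sum_neg_distrib]
    have hubP : ∀ x ∈ P, ⟪x, ψ⟫ ≤ ∑ i ∈ I, a i := by
      intro x hx
      rw [hval]
      apply Finset.sum_le_sum
      intro i _
      have := hPmem x hx i
      linarith
    have hx₁tight : ∀ i ∈ I, ⟪x₁, u i⟫ = -(a i) := fun i hi =>
      (Finset.mem_filter.1 hi).2 x₁ hx₁F'
    have hx₁ψ : ⟪x₁, ψ⟫ = ∑ i ∈ I, a i := by
      rw [hval]
      apply Finset.sum_congr rfl
      intro i hi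
      rw [hx₁tight i hi]
      ring
    have hbddP : BddAbove ((fun y => ⟪y, ψ⟫) '' P) := by
      refine ⟨∑ i ∈ I, a i, ?_⟩
      rintro z ⟨y, hy, rfl⟩
      exact hubP y hy
    have hsP : sSup ((fun y => ⟪y, ψ⟫) '' P) = ∑ i ∈ I, a i := by
      apply le_antisymm
      · have hne2 : ((fun y => ⟪y, ψ⟫) '' P).Nonempty := ⟨_, ⟨x₁, hCP hx₁.1, rfl⟩⟩
        apply csSup_le hne2
        rintro z ⟨y, hy, rfl⟩
        exact hubP y hy
      · rw [← hx₁ψ]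
        exact le_csSup hbddP ⟨x₁, hCP hx₁.1, rfl⟩
    refine ⟨{x ∈ P | ⟪x, ψ⟫ = sSup ((fun y => ⟪y, ψ⟫) '' P)},
      ⟨⟨x₁, hCP hx₁.1, by rw [hsP]; exact hx₁ψ⟩, ψ, rfl⟩, ?_⟩
    rw [key]
    ext x
    simp only [Set.mem_setOf_eq, Set.mem_inter_iff, hsP]
    constructor
    · rintro ⟨hxC, htight⟩
      refine ⟨⟨hCP hxC, ?_⟩, hCU hxC⟩
      rw [hval]
      apply Finset.sum_congr rfl
      intro i hi
      rw [htight i hi]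
      ring
    · rintro ⟨⟨hxP, hxψ⟩, hxU⟩
      refine ⟨⟨hxP, hxU⟩, ?_⟩
      have h1 : ∀ i ∈ I, -⟪x, u i⟫ ≤ a i := by
        intro i _
        have := hPmem x hxP i
        linarith
      have h2 : (∑ i ∈ I, -⟪x, u i⟫) = ∑ i ∈ I, a i := by rw [← hval]; exact hxψ
      have h3 := (Finset.sum_eq_sum_iff_of_le h1).1 h2
      intro i hi
      have := h3 i hi
      linarith
  · -- unbounded case : the sSup is 0 by convention
    have hs0 : sSup ((fun y => ⟪y, φ⟫) '' C) = 0 := Real.sSup_of_not_bddAbove hbdd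
    set φU : EuclideanSpace ℝ (Fin n) :=
      (U.starProjection φ : EuclideanSpace ℝ (Fin n)) with hφU
    have hperp : φ - φU ∈ Uᗮ := Submodule.sub_starProjection_mem_orthogonal φ
    have heq : ∀ x ∈ (U : Set (EuclideanSpace ℝ (Fin n))), ⟪x, φ⟫ = ⟪x, φU⟫ := by
      intro x hx
      have h0 : ⟪x, φ - φU⟫ = 0 := (Submodule.mem_orthogonal _ _).1 hperp x hx
      rw [inner_sub_right] at h0
      linarith
    have hbddP : ¬ BddAbove ((fun y => ⟪y, φU⟫) '' P) := by
      intro hb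
      apply hbdd
      obtain ⟨M, hM⟩ := hb
      refine ⟨M, ?_⟩
      rintro z ⟨y, hy, rfl⟩
      show ⟪y, φ⟫ ≤ M
      rw [heq y (hCU hy)]
      exact hM ⟨y, hCP hy, rfl⟩
    have hsP0 : sSup ((fun y => ⟪y, φU⟫) '' P) = 0 := Real.sSup_of_not_bddAbove hbddP
    refine ⟨{x ∈ P | ⟪x, φU⟫ = sSup ((fun y => ⟪y, φU⟫) '' P)},
      ⟨⟨x₁, hCP hx₁.1, ?_⟩, φU, rfl⟩, ?_⟩
    · rw [hsP0, ← heq x₁ (hCU hx₁.1), hx₁.2, hs0]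
    · rw [hFdef]
      ext x
      simp only [Set.mem_setOf_eq, Set.mem_inter_iff, hsP0, hs0]
      constructor
      · rintro ⟨hxC, hx0⟩
        exact ⟨⟨hxC.1, by rw [← heq x hxC.2]; exact hx0⟩, hxC.2⟩
      · rintro ⟨⟨hxP, hx0⟩, hxU⟩
        exact ⟨⟨hxP, hxU⟩, by rw [heq x hxU]; exact hx0⟩
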